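/- Let n ≥ 1, k ≥ 3, identify A_2 = {a_0,a_1} ⊆ A_k = {a_0,...,a_{k−1}}, and let A_{[1,k[} = {a_1,...,a_{k−1}} and A_{[2,k[} = {a_2,...,a_{k−1}}. Let X_{i=1}^n P_i be a finite maximal product code in nA_2^* (each P_i a finite maximal prefix code of A_2^*). Then the finite set X_{i=1}^n ( a_1·P_i ∪ spref(a_1·P_i)·A_{[2,k[} ) ⊆ nA_k^* is end-equivalent to nA_{[1,k[}, the set of n-tuples of letters from {a_1,...,a_{k−1}}. -/

import Mathlib

/-- A prefix code: no element is a strict prefix of another. -/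
def PrefixCode {A : Type*} (P : Set (List A)) : Prop :=
  ∀ p ∈ P, ∀ q ∈ P, p <+: q → p = q

/-- A maximal prefix code of the sub-free-monoid `L` (e.g. `A_2^* ⊆ A_k^*`). -/
def MaxPrefixCodeOn {A : Type*} (L P : Set (List A)) : Prop :=
  P ⊆ L ∧ PrefixCode P ∧ ∀ Q : Set (List A), Q ⊆ L → PrefixCode Q → P ⊆ Q → P = Q

/-- `A_2^*` viewed inside `A_k^*`: strings using only the letters `a_0, a_1`. -/
def Str2 (k : ℕ) : Set (List (Fin k)) :=
  {w | ∀ a ∈ w, (a : ℕ) < 2}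

/-- The set of strict prefixes of elements of `P`. -/
def spref {A : Type*} (P : Set (List A)) : Set (List A) :=
  {x | ∃ p ∈ P, x <+: p ∧ x ≠ p}

/-- `P ∪ spref(P)·A_{[2,k[}`. -/
def extd {k : ℕ} (P : Set (List (Fin k))) : Set (List (Fin k)) :=
  P ∪ {w | ∃ x ∈ spref P, ∃ b : Fin k, 2 ≤ (b : ℕ) ∧ w = x ++ [b]}

/-- `a_1·P = {a_1 p : p ∈ P}`. -/
def a1mul {k : ℕ} (hk : 3 ≤ k) (P : Set (List (Fin k))) : Set (List (Fin k)) :=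
  (fun w => (⟨1, by omega⟩ : Fin k) :: w) '' P

/-- The right ideal `C · nA^*` generated by a set `C ⊆ nA^*`. -/
def RIdeal {A : Type*} {n : ℕ} (C : Set (Fin n → List A)) : Set (Fin n → List A) :=
  {x | ∃ c ∈ C, ∃ w : Fin n → List A, x = fun i => c i ++ w i}

/-- A right ideal of `nA^*`: a set `R` with `R·nA^* = R`. -/
def IsRightIdeal {A : Type*} {n : ℕ} (R : Set (Fin n → List A)) : Prop :=
  ∀ r ∈ R, ∀ w : Fin n → List A, (fun i => r i ++ w i) ∈ R

/-- End-equivalence of finite sets `X, Y ⊆ nA^*`: for every right ideal `R`,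
`R ∩ X·nA^* = ∅ ↔ R ∩ Y·nA^* = ∅`. -/
def EndEquiv {A : Type*} {n : ℕ} (X Y : Set (Fin n → List A)) : Prop :=
  ∀ R : Set (Fin n → List A), IsRightIdeal R →
    (R ∩ RIdeal X = ∅ ↔ R ∩ RIdeal Y = ∅)

/-! The letters of `Y = nA_{[1,k[}` are exactly the first letters of the words of
`X = ∏ᵢ (a₁Pᵢ ∪ spref(a₁Pᵢ)·A_{[2,k[})`, so `X·nA^* ⊆ Y·nA^*`. Conversely every word beginning
with a letter `a ≥ 1` extends to one with a prefix in `a₁Pᵢ ∪ spref(a₁Pᵢ)·A_{[2,k[}`: for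
`a ≥ 2` the letter itself is such a prefix, and for `a = a₁` one follows the word through the
complete prefix code `Pᵢ` until it either completes a codeword or leaves `A_2^*` with a letter
`≥ 2` while still inside `spref(Pᵢ)`. As right ideals are closed under extension, this is
enough for `X·nA^*` to meet every right ideal that `Y·nA^*` meets. -/

section EndEquiv

variable {A : Type*} {n : ℕ}

theorem mem_RIdeal_pi {S : Fin n → Set (List A)} {x : Fin n → List A} :
    x ∈ RIdeal {u | ∀ i, u i ∈ S i} ↔ ∀ i, ∃ s ∈ S i, s <+: x i := by
  constructor
  · rintro ⟨c, hc, w, rfl⟩ i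
    exact ⟨c i, hc i, w i, rfl⟩
  · intro h
    choose c hc w hw using h
    exact ⟨c, hc, w, funext fun i => (hw i).symm⟩

theorem endEquiv_of_subset_of_forall_exists {X Y : Set (Fin n → List A)}
    (hXY : RIdeal X ⊆ RIdeal Y)
    (hYX : ∀ u ∈ RIdeal Y, ∃ w : Fin n → List A, (fun i => u i ++ w i) ∈ RIdeal X) :
    EndEquiv X Y := by
  intro R hR
  constructor
  · intro hX
    refine Set.eq_empty_of_forall_notMem fun u ⟨huR, huY⟩ => ?_
    obtain ⟨w, hw⟩ := hYX u huY
    exact hX.subset ⟨hR u huR w, hw⟩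
  · intro hY
    exact Set.subset_eq_empty (Set.inter_subset_inter_right R hXY) hY

theorem endEquiv_pi {S T : Fin n → Set (List A)}
    (hST : ∀ i, ∀ s ∈ S i, ∃ t ∈ T i, t <+: s)
    (hTS : ∀ i x, (∃ t ∈ T i, t <+: x) → ∃ w, ∃ s ∈ S i, s <+: x ++ w) :
    EndEquiv {u | ∀ i, u i ∈ S i} {u | ∀ i, u i ∈ T i} := by
  refine endEquiv_of_subset_of_forall_exists (fun x hx => ?_) (fun u hu => ?_)
  · rw [mem_RIdeal_pi] at hx ⊢
    intro i
    obtain ⟨s, hs, hsx⟩ := hx i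
    obtain ⟨t, ht, hts⟩ := hST i s hs
    exact ⟨t, ht, hts.trans hsx⟩
  · rw [mem_RIdeal_pi] at hu
    choose w s hs hsu using fun i => hTS i (u i) (hu i)
    exact ⟨w, mem_RIdeal_pi.mpr fun i => ⟨s i, hs i, hsu i⟩⟩

end EndEquiv

theorem MaxPrefixCodeOn.exists_prefix_or_prefix {A : Type*} {L P : Set (List A)}
    (h : MaxPrefixCodeOn L P) {s : List A} (hs : s ∈ L) :
    ∃ p ∈ P, p <+: s ∨ s <+: p := by
  by_contra! hincomp
  have hcode : PrefixCode (insert s P) := by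
    rintro p (rfl | hp) q (rfl | hq) hpq
    · rfl
    · exact absurd hpq (hincomp q hq).2
    · exact absurd hpq (hincomp p hp).1
    · exact h.2.1 p hp q hq hpq
  have hsP : s ∈ P :=
    (h.2.2 _ (Set.insert_subset hs h.1) hcode (Set.subset_insert s P)).symm ▸ Set.mem_insert s P
  exact (hincomp s hsP).1 (List.prefix_refl s)

theorem MaxPrefixCodeOn.nonempty {A : Type*} {L P : Set (List A)} (h : MaxPrefixCodeOn L P)
    (hL : L.Nonempty) : P.Nonempty :=
  let ⟨_, hs⟩ := hL
  let ⟨p, hp, _⟩ := h.exists_prefix_or_prefix hs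
  ⟨p, hp⟩

theorem List.exists_split_at_first_not {α : Type*} (p : α → Prop) (t : List α) :
    ∃ s, (∀ a ∈ s, p a) ∧ (t = s ∨ ∃ c d, ¬ p c ∧ t = s ++ c :: d) := by
  induction t with
  | nil => exact ⟨[], by simp⟩
  | cons c t ih =>
    by_cases hc : p c
    · obtain ⟨s, hs, rest⟩ := ih
      refine ⟨c :: s, List.forall_mem_cons.mpr ⟨hc, hs⟩, ?_⟩
      rcases rest with rfl | ⟨c', d, hc', rfl⟩
      · exact Or.inl rfl
      · exact Or.inr ⟨c', d, hc', rfl⟩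
    · exact ⟨[], by simp, Or.inr ⟨c, t, hc, rfl⟩⟩

section Extension

variable {k : ℕ} (hk : 3 ≤ k) {P : Set (List (Fin k))}

theorem exists_singleton_prefix_of_mem_extd_a1mul {e : List (Fin k)}
    (he : e ∈ extd (a1mul hk P)) : ∃ a : Fin k, 1 ≤ (a : ℕ) ∧ [a] <+: e := by
  rcases he with ⟨p, -, rfl⟩ | ⟨x, ⟨-, ⟨p, -, rfl⟩, hxq, -⟩, b, hb, rfl⟩
  · exact ⟨_, le_rfl, p, rfl⟩
  · cases x with
    | nil => exact ⟨b, by omega, [], rfl⟩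
    | cons c x =>
      obtain ⟨rfl, -⟩ := List.cons_prefix_cons.mp hxq
      exact ⟨_, le_rfl, x ++ [b], rfl⟩

theorem singleton_mem_extd_a1mul_of_two_le (hne : P.Nonempty) {a : Fin k}
    (ha : 2 ≤ (a : ℕ)) : [a] ∈ extd (a1mul hk P) := by
  obtain ⟨p, hp⟩ := hne
  exact Or.inr ⟨[], ⟨_, ⟨p, hp, rfl⟩, List.nil_prefix, List.cons_ne_nil _ _ ∘ Eq.symm⟩,
    a, ha, rfl⟩

theorem exists_append_prefix_mem_extd_a1mul_of_head_eq_one (hP : MaxPrefixCodeOn (Str2 k) P)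
    (t : List (Fin k)) :
    ∃ w, ∃ e ∈ extd (a1mul hk P), e <+: ((⟨1, by omega⟩ : Fin k) :: t) ++ w := by
  obtain ⟨s, hs, hrest⟩ := List.exists_split_at_first_not (fun c : Fin k => (c : ℕ) < 2) t
  obtain ⟨p, hp, hps | ⟨r, rfl⟩⟩ := hP.exists_prefix_or_prefix hs
  · refine ⟨[], _, Or.inl ⟨p, hp, rfl⟩, ?_⟩
    have hst : s <+: t := by
      rcases hrest with rfl | ⟨c, d, -, rfl⟩
      exacts [List.prefix_refl t, List.prefix_append s _]
    simpa using hps.trans hst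
  rcases hrest with ht | ⟨c, d, hc, ht⟩ <;> subst t
  · exact ⟨r, _, Or.inl ⟨s ++ r, hp, rfl⟩, List.prefix_refl _⟩
  cases r with
  | nil => exact ⟨[], _, Or.inl ⟨s, by simpa using hp, rfl⟩, by simp⟩
  | cons r₀ r =>
    have hspref : (⟨1, by omega⟩ : Fin k) :: s ∈ spref (a1mul hk P) :=
      ⟨_, ⟨_, hp, rfl⟩, List.cons_prefix_cons.mpr ⟨rfl, List.prefix_append s _⟩, by simp⟩
    exact ⟨[], _, Or.inr ⟨_, hspref, c, by omega, rfl⟩, ⟨d, by simp⟩⟩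

theorem exists_append_prefix_mem_extd_a1mul (hP : MaxPrefixCodeOn (Str2 k) P) {a : Fin k}
    (ha : 1 ≤ (a : ℕ)) {x : List (Fin k)} (hax : [a] <+: x) :
    ∃ w, ∃ e ∈ extd (a1mul hk P), e <+: x ++ w := by
  obtain ⟨t, rfl⟩ := hax
  by_cases ha₂ : 2 ≤ (a : ℕ)
  · have hne : P.Nonempty := hP.nonempty ⟨[], List.forall_mem_nil _⟩
    exact ⟨[], [a], singleton_mem_extd_a1mul_of_two_le hk hne ha₂, by simp⟩
  · rw [show a = ⟨1, by omega⟩ from Fin.ext (by simp only; omega)]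
    exact exists_append_prefix_mem_extd_a1mul_of_head_eq_one hk hP t

end Extension

theorem stmt_18_general {n k : ℕ} (hk : 3 ≤ k)
    (P : Fin n → Set (List (Fin k)))
    (hP : ∀ i, MaxPrefixCodeOn (Str2 k) (P i)) :
    EndEquiv {u : Fin n → List (Fin k) | ∀ i, u i ∈ extd (a1mul hk (P i))}
      {u : Fin n → List (Fin k) | ∀ i, ∃ a : Fin k, 1 ≤ (a : ℕ) ∧ u i = [a]} := by
  refine endEquiv_pi (S := fun i => extd (a1mul hk (P i)))
    (T := fun _ => {v | ∃ a : Fin k, 1 ≤ (a : ℕ) ∧ v = [a]}) (fun i e he => ?_) (fun i x hx => ?_)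
  · obtain ⟨a, ha, hae⟩ := exists_singleton_prefix_of_mem_extd_a1mul hk he
    exact ⟨[a], ⟨a, ha, rfl⟩, hae⟩
  · obtain ⟨_, ⟨a, ha, rfl⟩, hax⟩ := hx
    exact exists_append_prefix_mem_extd_a1mul hk (hP i) ha hax

/-- If `X_i P_i` is a finite maximal product code in `n(A_2)^*` (each `P_i` a finite
maximal prefix code of `A_2^*`), then `X_i (a_1·P_i ∪ spref(a_1·P_i)·A_{[2,k[})` is
end-equivalent to `nA_{[1,k[}`, the set of `n`-tuples of letters from `{a_1,...,a_{k-1}}`. -/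
theorem stmt_18 {n k : ℕ} (hn : 1 ≤ n) (hk : 3 ≤ k)
    (P : Fin n → Set (List (Fin k)))
    (hfin : ∀ i, (P i).Finite)
    (hP : ∀ i, MaxPrefixCodeOn (Str2 k) (P i)) :
    EndEquiv {u : Fin n → List (Fin k) | ∀ i, u i ∈ extd (a1mul hk (P i))}
      {u : Fin n → List (Fin k) | ∀ i, ∃ a : Fin k, 1 ≤ (a : ℕ) ∧ u i = [a]} :=
  stmt_18_general hk P hP
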